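/- arXiv:1209.2510 — 2 statements merged into one kernel-verified Lean document; each statement's English description precedes it below -/
import Mathlib

section
/- The function Q(x) = (3 / cosh²(2x))^{1/4} satisfies the ODE Q'' + Q⁵ = Q on ℝ. -/
/-!
Write `Q x = 3^(1/4) * cosh (2x)^(-1/2)`. For any `b, r`, differentiating `cosh (b x)^r` twice and
using `sinh² = cosh² - 1` gives `r²b² cosh^r - r(r-1)b² cosh^(r-2)`; for `b = 2`, `r = -1/2` this is
`Q'' = Q - 3 cosh(2x)^(-2) Q`, and `Q⁴ = 3 cosh(2x)^(-2)` makes the defect exactly `-Q⁵`.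
-/

noncomputable def Qgs (x : ℝ) : ℝ := (3 / (Real.cosh (2 * x)) ^ 2) ^ ((1 : ℝ) / 4)

open Real

section CoshPow

variable (b r : ℝ)

theorem hasDerivAt_cosh_mul_rpow (x : ℝ) :
    HasDerivAt (fun x => cosh (b * x) ^ r) (r * b * sinh (b * x) * cosh (b * x) ^ (r - 1)) x := by
  convert (hasDerivAt_const_mul b).cosh.rpow_const (p := r) (Or.inl (cosh_pos (b * x)).ne') using 1
  ring

theorem deriv_cosh_mul_rpow :
    deriv (fun x => cosh (b * x) ^ r) = fun x => r * b * sinh (b * x) * cosh (b * x) ^ (r - 1) :=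
  funext fun x => (hasDerivAt_cosh_mul_rpow b r x).deriv

theorem deriv_deriv_cosh_mul_rpow (x : ℝ) :
    deriv (deriv fun x => cosh (b * x) ^ r) x =
      r ^ 2 * b ^ 2 * cosh (b * x) ^ r - r * (r - 1) * b ^ 2 * cosh (b * x) ^ (r - 2) := by
  have h : HasDerivAt (fun x => r * b * sinh (b * x) * cosh (b * x) ^ (r - 1)) _ x :=
    ((hasDerivAt_const_mul b).sinh.const_mul (r * b)).mul (hasDerivAt_cosh_mul_rpow b (r - 1) x)
  rw [deriv_cosh_mul_rpow, h.deriv]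
  have hc : cosh (b * x) ≠ 0 := (cosh_pos _).ne'
  have h1 : cosh (b * x) ^ (r - 1) = cosh (b * x) ^ (r - 2) * cosh (b * x) := by
    rw [← rpow_add_one hc]; ring_nf
  have h2 : cosh (b * x) ^ r = cosh (b * x) ^ (r - 2) * cosh (b * x) ^ 2 := by
    rw [← rpow_add_natCast hc]; push_cast; ring_nf
  rw [show r - 1 - 1 = r - 2 by ring, h1, h2]
  linear_combination r * (r - 1) * b ^ 2 * cosh (b * x) ^ (r - 2) * sinh_sq (b * x)

end CoshPow

theorem Qgs_eq_mul_cosh_rpow : Qgs = fun x => 3 ^ (1 / 4 : ℝ) * cosh (2 * x) ^ (-1 / 2 : ℝ) := by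
  funext x
  have hc := (cosh_pos (2 * x)).le
  rw [Qgs, div_rpow (by norm_num) (by positivity), ← rpow_natCast, ← rpow_mul hc,
    show (-1 / 2 : ℝ) = -((2 : ℕ) * (1 / 4)) by norm_num, rpow_neg hc, div_eq_mul_inv]

theorem Qgs_pow_four (x : ℝ) : Qgs x ^ 4 = 3 / cosh (2 * x) ^ 2 := by
  rw [Qgs, ← rpow_natCast, ← rpow_mul (by positivity)]
  norm_num

theorem ground_state_ode : ∀ x : ℝ, deriv (deriv Qgs) x + Qgs x ^ 5 = Qgs x := by
  intro x
  have hc : cosh (2 * x) ≠ 0 := (cosh_pos _).ne'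
  rw [pow_succ, Qgs_pow_four, Qgs_eq_mul_cosh_rpow]
  simp only [deriv_const_mul_field']
  rw [deriv_deriv_cosh_mul_rpow, show (-1 / 2 : ℝ) - 2 = -1 / 2 - (2 : ℕ) by norm_num,
    rpow_sub_natCast hc]
  field_simp
  ring
end

section
/- If Y₀ is a Schwartz-class solution of L Y₀ = 5Q⁴ with L f = -f'' + f - 5Q⁴ f, then (Q, Y₀) = -(3/4) ∫ Q, where (f,g) = ∫ fg. -/
open MeasureTheory Real Filter

lemma integrable_exp_neg_abs' : Integrable (fun y : ℝ => Real.exp (-|y|)) := by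
  have h1 : IntegrableOn (fun y : ℝ => Real.exp (-|y|)) (Set.Ioi 0) := by
    apply (exp_neg_integrableOn_Ioi 0 (by norm_num : (0:ℝ) < 1)).congr_fun ?_ measurableSet_Ioi
    intro x hx
    simp [abs_of_pos (Set.mem_Ioi.mp hx)]
  have h2 : IntegrableOn (fun y : ℝ => Real.exp (-|y|)) (Set.Iic 0) := by
    apply (integrableOn_exp_Iic 0).congr_fun ?_ measurableSet_Iic
    intro x hx
    simp [abs_of_nonpos (Set.mem_Iic.mp hx)]
  have := h2.union h1
  rwa [Set.Iic_union_Ioi, integrableOn_univ] at this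

lemma integrable_of_expbound (f : ℝ → ℝ) (hf : Continuous f) (C : ℝ)
    (hb : ∀ y, |f y| ≤ C * Real.exp (-|y|)) : Integrable f := by
  apply Integrable.mono (integrable_exp_neg_abs'.const_mul C) hf.aestronglyMeasurable
  filter_upwards with y
  rw [Real.norm_eq_abs, Real.norm_eq_abs]
  exact (hb y).trans (le_abs_self _)

lemma tendsto_bound_atTop : Tendsto (fun y : ℝ => (1 + |y|) * Real.exp (-|y|)) atTop (nhds 0) := by
  have h : Tendsto (fun y : ℝ => Real.exp (-y) + y * Real.exp (-y)) atTop (nhds 0) := by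
    have h1 : Tendsto (fun y : ℝ => Real.exp (-y)) atTop (nhds 0) := Real.tendsto_exp_neg_atTop_nhds_zero
    have h2 : Tendsto (fun y : ℝ => y * Real.exp (-y)) atTop (nhds 0) := by
      simpa using Real.tendsto_pow_mul_exp_neg_atTop_nhds_zero 1
    simpa using h1.add h2
  apply h.congr'
  filter_upwards [eventually_ge_atTop (0:ℝ)] with y hy
  rw [abs_of_nonneg hy]; ring

lemma tendsto_zero_of_expbound (h : ℝ → ℝ) (C : ℝ)
    (hb : ∀ y, |h y| ≤ C * ((1 + |y|) * Real.exp (-|y|))) :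
    Tendsto h atTop (nhds 0) ∧ Tendsto h atBot (nhds 0) := by
  have hg : Tendsto (fun y : ℝ => C * ((1 + |y|) * Real.exp (-|y|))) atTop (nhds 0) := by
    simpa using tendsto_bound_atTop.const_mul C
  constructor
  · exact squeeze_zero_norm (fun y => by rw [Real.norm_eq_abs]; exact hb y) hg
  · have hgb : Tendsto (fun y : ℝ => C * ((1 + |y|) * Real.exp (-|y|))) atBot (nhds 0) := by
      have := hg.comp tendsto_neg_atBot_atTop
      exact this.congr (fun y => by simp [Function.comp, abs_neg])
    exact squeeze_zero_norm (fun y => by rw [Real.norm_eq_abs]; exact hb y) hgb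

set_option maxHeartbeats 1000000 in
theorem scalar_product_Q_Y0 (Q Y₀ : ℝ → ℝ)
    (hQ : ContDiff ℝ (⊤ : ℕ∞) Q)
    (hODE : ∀ x : ℝ, deriv (deriv Q) x + Q x ^ 5 = Q x)
    (hQdecay : ∀ k : ℕ, ∃ C > 0, ∀ y : ℝ,
      |iteratedDeriv k Q y| ≤ C * Real.exp (-|y|))
    (hY : ContDiff ℝ (⊤ : ℕ∞) Y₀)
    (hYdecay : ∀ k : ℕ, ∃ C > 0, ∀ y : ℝ,
      |iteratedDeriv k Y₀ y| ≤ C * Real.exp (-|y|))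
    (hLY : ∀ y : ℝ, -deriv (deriv Y₀) y + Y₀ y - 5 * Q y ^ 4 * Y₀ y = 5 * Q y ^ 4) :
    (∫ y : ℝ, Q y * Y₀ y) = -(3 / 4) * ∫ y : ℝ, Q y := by
  have hQi : ContDiff ℝ (((⊤:ℕ∞)) : WithTop ℕ∞) Q := hQ.of_le (by simp)
  have hYi : ContDiff ℝ (((⊤:ℕ∞)) : WithTop ℕ∞) Y₀ := hY.of_le (by simp)
  have hQ1 : ContDiff ℝ (((⊤:ℕ∞)) : WithTop ℕ∞) (deriv Q) := (contDiff_infty_iff_deriv.mp hQi).2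
  have hQ2 : ContDiff ℝ (((⊤:ℕ∞)) : WithTop ℕ∞) (deriv (deriv Q)) := (contDiff_infty_iff_deriv.mp hQ1).2
  have hY1 : ContDiff ℝ (((⊤:ℕ∞)) : WithTop ℕ∞) (deriv Y₀) := (contDiff_infty_iff_deriv.mp hYi).2
  -- the primitive W and the integrand h
  set W : ℝ → ℝ := fun y => -(deriv Y₀ y) * (Q y / 2 + y * deriv Q y)
      + Y₀ y * ((3:ℝ)/2 * deriv Q y + y * deriv (deriv Q) y)
      - y * Q y ^ 5 + (3:ℝ)/2 * deriv Q y with hWdef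
  set h : ℝ → ℝ := fun y => 2 * (Q y * Y₀ y) + (3:ℝ)/2 * Q y with hhdef
  have hWd : ∀ y : ℝ, HasDerivAt W (h y) y := by
    intro y
    have dQ : HasDerivAt Q (deriv Q y) y := (hQi.differentiable (by simp) y).hasDerivAt
    have dQ1 : HasDerivAt (deriv Q) (deriv (deriv Q) y) y :=
      (hQ1.differentiable (by simp) y).hasDerivAt
    have dQ2 : HasDerivAt (deriv (deriv Q)) (deriv Q y - 5 * Q y ^ 4 * deriv Q y) y := by
      have heq : (fun x => Q x - Q x ^ 5) = deriv (deriv Q) := funext fun x => by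
        linarith [hODE x]
      have h5 : HasDerivAt (fun x => Q x - Q x ^ 5) (deriv Q y - 5 * Q y ^ 4 * deriv Q y) y := by
        have := dQ.sub (dQ.pow 5)
        exact this.congr_deriv (by norm_num)
      rwa [heq] at h5
    have dY : HasDerivAt Y₀ (deriv Y₀ y) y := (hYi.differentiable (by simp) y).hasDerivAt
    have dY1 : HasDerivAt (deriv Y₀) (deriv (deriv Y₀) y) y :=
      (hY1.differentiable (by simp) y).hasDerivAt
    have e2 : deriv (deriv Y₀) y = Y₀ y - 5 * Q y ^ 4 * Y₀ y - 5 * Q y ^ 4 := by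
      linarith [hLY y]
    have eQ : deriv (deriv Q) y = Q y - Q y ^ 5 := by linarith [hODE y]
    have D := (((dY1.neg.mul ((dQ.div_const 2).add ((hasDerivAt_id' (x := y)).mul dQ1))).add
        (dY.mul ((dQ1.const_mul ((3:ℝ)/2)).add ((hasDerivAt_id' (x := y)).mul dQ2)))).sub
        ((hasDerivAt_id' (x := y)).mul (dQ.pow 5))).add (dQ1.const_mul ((3:ℝ)/2))
    refine D.congr_deriv ?_
    simp only [hhdef, Pi.add_apply, Pi.mul_apply, Pi.neg_apply, Pi.pow_apply, Nat.cast_ofNat,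
      show (5:ℕ) - 1 = 4 from rfl]
    rw [e2, eQ]
    ring

  -- decay constants
  obtain ⟨C0, hC0pos, hC0⟩ := hQdecay 0
  obtain ⟨C1, hC1pos, hC1⟩ := hQdecay 1
  obtain ⟨C2, hC2pos, hC2⟩ := hQdecay 2
  obtain ⟨D0, hD0pos, hD0⟩ := hYdecay 0
  obtain ⟨D1, hD1pos, hD1⟩ := hYdecay 1
  simp only [iteratedDeriv_zero] at hC0 hD0
  simp only [iteratedDeriv_one] at hC1 hD1
  have h2eq : iteratedDeriv 2 Q = deriv (deriv Q) := by
    rw [show (2:ℕ) = 1 + 1 by norm_num, iteratedDeriv_succ, iteratedDeriv_one]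
  rw [h2eq] at hC2
  -- integrability
  have hQc : Continuous Q := hQ.continuous
  have hYc : Continuous Y₀ := hY.continuous
  have hIQ : Integrable Q := integrable_of_expbound Q hQc C0 hC0
  have hexple : ∀ y : ℝ, Real.exp (-|y|) ≤ 1 := fun y =>
    Real.exp_le_one_iff.mpr (neg_nonpos.mpr (abs_nonneg y))
  have hIQY : Integrable (fun y => Q y * Y₀ y) := by
    apply integrable_of_expbound _ (hQc.mul hYc) (C0 * D0)
    intro y
    have b0 := hC0 y
    have d0 := hD0 y
    have e1 := hexple y
    have e0 := Real.exp_pos (-|y|)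
    rw [Pi.mul_apply, abs_mul]
    calc |Q y| * |Y₀ y| ≤ (C0 * Real.exp (-|y|)) * (D0 * Real.exp (-|y|)) :=
          mul_le_mul b0 d0 (abs_nonneg _) (by positivity)
      _ = (C0 * D0 * Real.exp (-|y|)) * Real.exp (-|y|) := by ring
      _ ≤ (C0 * D0 * Real.exp (-|y|)) * 1 := by
          apply mul_le_mul_of_nonneg_left e1
          positivity
      _ = C0 * D0 * Real.exp (-|y|) := mul_one _
  have hIh : Integrable h := by
    rw [hhdef]
    exact (hIQY.const_mul 2).add (hIQ.const_mul ((3:ℝ)/2))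
  -- bound on W
  have hWb : ∀ y : ℝ, |W y| ≤ (D1*(C0+C1) + D0*(2*C1+C2) + C0^5 + 2*C1) *
      ((1 + |y|) * Real.exp (-|y|)) := by
    intro y
    have b0 := hC0 y
    have b1 := hC1 y
    have b2 := hC2 y
    have d0 := hD0 y
    have d1 := hD1 y
    set E := Real.exp (-|y|) with hE
    set X := (1 + |y|) * E with hX
    have hE0 : 0 < E := Real.exp_pos _
    have hE1 : E ≤ 1 := hexple y
    have hy0 : (0:ℝ) ≤ |y| := abs_nonneg y
    have hX0 : 0 ≤ X := by positivity
    have aQ := abs_nonneg (Q y)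
    have aQ1 := abs_nonneg (deriv Q y)
    have aQ2 := abs_nonneg (deriv (deriv Q) y)
    have aY := abs_nonneg (Y₀ y)
    have aY1 := abs_nonneg (deriv Y₀ y)
    have hEE : E * E ≤ E := by nlinarith
    have hA : |(-(deriv Y₀ y)) * (Q y / 2 + y * deriv Q y)| ≤ (D1*(C0+C1)) * X := by
      rw [abs_mul, abs_neg]
      have inner : |Q y / 2 + y * deriv Q y| ≤ (C0/2 + C1*|y|) * E := by
        calc |Q y / 2 + y * deriv Q y| ≤ |Q y|/2 + |y| * |deriv Q y| := by
              refine (abs_add_le _ _).trans ?_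
              rw [abs_div, abs_mul]
              norm_num
          _ ≤ (C0/2 + C1*|y|) * E := by nlinarith
      calc |deriv Y₀ y| * |Q y / 2 + y * deriv Q y| ≤ (D1 * E) * ((C0/2 + C1*|y|) * E) :=
            mul_le_mul d1 inner (abs_nonneg _) (by positivity)
        _ = (D1 * (C0/2 + C1*|y|)) * (E * E) := by ring
        _ ≤ (D1 * (C0/2 + C1*|y|)) * E := by
            apply mul_le_mul_of_nonneg_left hEE
            positivity
        _ ≤ (D1*(C0+C1)) * X := by
            rw [hX]
            nlinarith [mul_pos hD1pos hC0pos, mul_pos hD1pos hC1pos,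
              mul_nonneg (mul_pos hD1pos hC1pos).le hy0]
    have hB : |Y₀ y * ((3:ℝ)/2 * deriv Q y + y * deriv (deriv Q) y)| ≤ (D0*(2*C1+C2)) * X := by
      rw [abs_mul]
      have inner : |(3:ℝ)/2 * deriv Q y + y * deriv (deriv Q) y| ≤ ((3:ℝ)/2*C1 + C2*|y|) * E := by
        calc |(3:ℝ)/2 * deriv Q y + y * deriv (deriv Q) y|
            ≤ (3:ℝ)/2 * |deriv Q y| + |y| * |deriv (deriv Q) y| := by
              refine (abs_add_le _ _).trans ?_
              rw [abs_mul, abs_mul, show |(3:ℝ)/2| = (3:ℝ)/2 by norm_num]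
          _ ≤ ((3:ℝ)/2*C1 + C2*|y|) * E := by nlinarith
      calc |Y₀ y| * |(3:ℝ)/2 * deriv Q y + y * deriv (deriv Q) y|
          ≤ (D0 * E) * (((3:ℝ)/2*C1 + C2*|y|) * E) :=
            mul_le_mul d0 inner (abs_nonneg _) (by positivity)
        _ = (D0 * ((3:ℝ)/2*C1 + C2*|y|)) * (E * E) := by ring
        _ ≤ (D0 * ((3:ℝ)/2*C1 + C2*|y|)) * E := by
            apply mul_le_mul_of_nonneg_left hEE
            positivity
        _ ≤ (D0*(2*C1+C2)) * X := by
            rw [hX]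
            nlinarith [mul_pos hD0pos hC1pos, mul_pos hD0pos hC2pos,
              mul_nonneg (mul_pos hD0pos hC2pos).le hy0,
              mul_nonneg (mul_pos hD0pos hC1pos).le hy0]
    have hq5 : |Q y ^ 5| ≤ C0^5 * E := by
      rw [abs_pow]
      calc |Q y| ^ 5 ≤ (C0 * E)^5 := pow_le_pow_left₀ (abs_nonneg _) b0 5
        _ = C0^5 * E^5 := by ring
        _ ≤ C0^5 * E := by
            have h5 : E^5 ≤ E := by nlinarith [pow_pos hE0 2, pow_pos hE0 3]
            nlinarith [pow_pos hC0pos 5]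
    have hC : |y * Q y ^ 5| ≤ C0^5 * X := by
      rw [abs_mul, hX]
      nlinarith [mul_le_mul_of_nonneg_left hq5 hy0, pow_pos hC0pos 5,
        mul_nonneg hy0 hE0.le]
    have hD : |(3:ℝ)/2 * deriv Q y| ≤ (2*C1) * X := by
      rw [abs_mul, hX]
      have : |(3:ℝ)/2| = (3:ℝ)/2 := by norm_num
      rw [this]
      nlinarith [mul_nonneg hC1pos.le hy0, mul_nonneg (mul_nonneg hC1pos.le hy0) hE0.le]
    have tri : |W y| ≤ |(-(deriv Y₀ y)) * (Q y / 2 + y * deriv Q y)|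
        + |Y₀ y * ((3:ℝ)/2 * deriv Q y + y * deriv (deriv Q) y)|
        + |y * Q y ^ 5| + |(3:ℝ)/2 * deriv Q y| := by
      simp only [hWdef]
      set A := (-(deriv Y₀ y)) * (Q y / 2 + y * deriv Q y)
      set B := Y₀ y * ((3:ℝ)/2 * deriv Q y + y * deriv (deriv Q) y)
      set Cc := y * Q y ^ 5
      set Dd := (3:ℝ)/2 * deriv Q y
      have t1 := abs_add_le (A + B - Cc) Dd
      have t2 := abs_sub (A + B) Cc
      have t3 := abs_add_le A B
      linarith
    calc |W y| ≤ (D1*(C0+C1)) * X + (D0*(2*C1+C2)) * X + C0^5 * X + (2*C1) * X := by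
          linarith
      _ = (D1*(C0+C1) + D0*(2*C1+C2) + C0^5 + 2*C1) * X := by ring
  -- conclusion
  have hWtend := tendsto_zero_of_expbound W _ hWb
  have key : (∫ y : ℝ, h y) = 0 := by
    have h1 : Tendsto (fun T : ℝ => ∫ y in (-T)..T, h y) atTop (nhds (∫ y : ℝ, h y)) :=
      intervalIntegral_tendsto_integral hIh tendsto_neg_atTop_atBot tendsto_id
    have h2 : ∀ T : ℝ, (∫ y in (-T)..T, h y) = W T - W (-T) := fun T =>
      intervalIntegral.integral_eq_sub_of_hasDerivAt (fun x _ => hWd x)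
        hIh.intervalIntegrable
    have h3 : Tendsto (fun T : ℝ => W T - W (-T)) atTop (nhds 0) := by
      have := hWtend.1.sub (hWtend.2.comp tendsto_neg_atTop_atBot)
      simpa using this
    have h4 : Tendsto (fun T : ℝ => ∫ y in (-T)..T, h y) atTop (nhds 0) :=
      h3.congr (fun T => (h2 T).symm)
    exact tendsto_nhds_unique h1 h4
  have expand : (∫ y : ℝ, h y) = 2 * (∫ y : ℝ, Q y * Y₀ y) + (3:ℝ)/2 * (∫ y : ℝ, Q y) := by
    rw [hhdef]
    rw [integral_add (hIQY.const_mul 2) (hIQ.const_mul ((3:ℝ)/2)),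
      integral_const_mul, integral_const_mul]
  rw [expand] at key
  linarith
end
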